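/- arXiv:1101.0758 — 2 statements merged into one kernel-verified Lean document; each statement's English description precedes it below -/
import Mathlib

section
/- Let μ = (∅, …, ∅, (n)) be the r-partition whose last component is the one-row partition (n) and whose other components are empty. Then for every r-partition λ of size n: β_{λμ} = 1 if λ = ((n_1), (n_2), …, (n_r)) for some nonnegative integers n_1,…,n_r with n_1+…+n_r = n (each component a one-row partition or empty), and β_{λμ} = 0 otherwise. -/
open scoped BigOperators

namespace CQSA

/-- A box of a multidiagram: component `k`, row `i`, column `j` (0-indexed column). -/
abbrev Box (r : ℕ) (m : Fin r → ℕ) : Type := Σ k : Fin r, Fin (m k) × ℕ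

/-- An entry of a tableau: component `c`, letter `a` (0-indexed). -/
abbrev Entry (r : ℕ) (m : Fin r → ℕ) : Type := Σ c : Fin r, Fin (m c)

/-- Multicompositions with `m k` parts in component `k`. -/
abbrev MComp (r : ℕ) (m : Fin r → ℕ) : Type := (k : Fin r) → Fin (m k) → ℕ

variable {r : ℕ} {m : Fin r → ℕ}

/-- The size `|λ|` of a multicomposition. -/
def size (lam : MComp r m) : ℕ := ∑ k, ∑ i, lam k i

/-- A multicomposition is a multipartition if each component is weakly decreasing. -/
def IsMPartition (lam : MComp r m) : Prop := ∀ k, Antitone (lam k)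

/-- `ζ(λ) = (|λ^(1)|, …, |λ^(r)|)`. -/
def zeta (lam : MComp r m) : Fin r → ℕ := fun k => ∑ i, lam k i

/-- Dominance order: `mu ⊴ lam`. -/
def DomLE (mu lam : MComp r m) : Prop :=
  ∀ (k : Fin r) (i : Fin (m k)),
    ((∑ l ∈ Finset.univ.filter (fun l => l < k), ∑ j, mu l j) +
        ∑ j ∈ Finset.univ.filter (fun j => j ≤ i), mu k j) ≤
      ((∑ l ∈ Finset.univ.filter (fun l => l < k), ∑ j, lam l j) +
        ∑ j ∈ Finset.univ.filter (fun j => j ≤ i), lam k j)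

/-- Membership of a box in the diagram `[λ]`. -/
def InDiag (lam : MComp r m) (x : Box r m) : Prop := x.2.2 < lam x.1 x.2.1

/-- The skew diagram `[λ] \ [ν]` as a predicate on boxes. -/
def SkewD (lamBig lamSmall : MComp r m) (x : Box r m) : Prop :=
  InDiag lamBig x ∧ ¬ InDiag lamSmall x

/-- Order on entries: `(a,c) ≤ (a',c')` iff `c < c'`, or `c = c'` and `a ≤ a'`. -/
def entryLE (e f : Entry r m) : Prop :=
  (e.1 : ℕ) < (f.1 : ℕ) ∨ ((e.1 : ℕ) = (f.1 : ℕ) ∧ (e.2 : ℕ) ≤ (f.2 : ℕ))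

/-- Strict order on entries. -/
def entryLT (e f : Entry r m) : Prop :=
  (e.1 : ℕ) < (f.1 : ℕ) ∨ ((e.1 : ℕ) = (f.1 : ℕ) ∧ (e.2 : ℕ) < (f.2 : ℕ))

/-- Reading order on boxes: `x ⪰ y`, i.e. `x ≻ y` or `x = y`, where
`(i,j,k) ≻ (i',j',k')` iff `k > k'`, or `k = k'` and `j > j'`, or
`k = k'`, `j = j'` and `i < i'`. -/
def BoxGE (x y : Box r m) : Prop :=
  (y.1 : ℕ) < (x.1 : ℕ) ∨
    ((x.1 : ℕ) = (y.1 : ℕ) ∧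
      (y.2.2 < x.2.2 ∨ (x.2.2 = y.2.2 ∧ (x.2.1 : ℕ) ≤ (y.2.1 : ℕ))))

/-- Semistandardness of a filling `T` of the set of boxes `D` with weight `mu`. -/
structure IsSST (D : Box r m → Prop) (mu : MComp r m)
    (T : {x : Box r m // D x} → Entry r m) : Prop where
  comp_le : ∀ x : {x : Box r m // D x}, (x.1.1 : ℕ) ≤ ((T x).1 : ℕ)
  row_weak : ∀ x y : {x : Box r m // D x},
    x.1.1 = y.1.1 → (x.1.2.1 : ℕ) = (y.1.2.1 : ℕ) → x.1.2.2 + 1 = y.1.2.2 →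
      entryLE (T x) (T y)
  col_strict : ∀ x y : {x : Box r m // D x},
    x.1.1 = y.1.1 → (x.1.2.1 : ℕ) + 1 = (y.1.2.1 : ℕ) → x.1.2.2 = y.1.2.2 →
      entryLT (T x) (T y)
  weight : ∀ e : Entry r m, mu e.1 e.2 = Nat.card {x : {x : Box r m // D x} // T x = e}

/-- Singularity of a tableau: every prefix of the component-`c` reading word has
weakly decreasing content, for every `c`. -/
def IsSingular (D : Box r m → Prop) (T : {x : Box r m // D x} → Entry r m) : Prop :=
  ∀ (b : {x : Box r m // D x}) (a : ℕ),
    Nat.card {y : {x : Box r m // D x} //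
        (T y).1 = (T b).1 ∧ BoxGE y.1 b.1 ∧ ((T y).2 : ℕ) = a + 1} ≤
      Nat.card {y : {x : Box r m // D x} //
        (T y).1 = (T b).1 ∧ BoxGE y.1 b.1 ∧ ((T y).2 : ℕ) = a}

/-- The number of semistandard tableaux on the boxes `D` with weight `mu`. -/
noncomputable def nSST (D : Box r m → Prop) (mu : MComp r m) : ℕ :=
  Nat.card {T : {x : Box r m // D x} → Entry r m // IsSST D mu T}

/-- The number of singular semistandard tableaux on the boxes `D` with weight `mu`. -/
noncomputable def nSingSST (D : Box r m → Prop) (mu : MComp r m) : ℕ :=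
  Nat.card {T : {x : Box r m // D x} → Entry r m // IsSST D mu T ∧ IsSingular D T}

/-- `#CT₀(λ,μ)`: the number of semistandard tableaux of shape `λ` and weight `μ`. -/
noncomputable def nCT (lam mu : MComp r m) : ℕ := nSST (InDiag lam) mu

/-- `β_{λμ}`: the number of singular semistandard tableaux of shape `λ` and weight `μ`. -/
noncomputable def beta (lam mu : MComp r m) : ℕ := nSingSST (InDiag lam) mu


/-- The Kostka number `K_{ν μ}`: the number of ordinary semistandard Young
tableaux of shape `ν` (rows indexed by `ℕ`) and weight `μ` (a finite sequence of
nonnegative integers, indexed by the linearly ordered alphabet `ι`). -/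
noncomputable def kostka (nu : ℕ → ℕ) {ι : Type} [LinearOrder ι] (mu : ι → ℕ) : ℕ :=
  Nat.card {T : {x : ℕ × ℕ // x.2 < nu x.1} → ι //
    (∀ x y : {x : ℕ × ℕ // x.2 < nu x.1}, x.1.1 = y.1.1 → x.1.2 + 1 = y.1.2 → T x ≤ T y) ∧
    (∀ x y : {x : ℕ × ℕ // x.2 < nu x.1}, x.1.1 + 1 = y.1.1 → x.1.2 = y.1.2 → T x < T y) ∧
    (∀ a : ι, mu a = Nat.card {x : {x : ℕ × ℕ // x.2 < nu x.1} // T x = a})}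

/-- Extension of a finite tuple by zeros. -/
def extF {L : ℕ} (f : Fin L → ℕ) : ℕ → ℕ := fun i => if h : i < L then f ⟨i, h⟩ else 0

/-- The Schur polynomial of the partition `ν` (of size `d`) in `N` variables:
`s_ν(x_1,…,x_N) = ∑_μ K_{νμ} x^μ`. -/
noncomputable def schurP (N d : ℕ) (nu : ℕ → ℕ) : MvPolynomial (Fin N) ℤ :=
  ∑ f ∈ (Fintype.piFinset fun _ : Fin N => Finset.range (d + 1)) |>.filter
      (fun f => ∑ i, f i = d),
    (kostka nu f : ℤ) • MvPolynomial.monomial (Finsupp.equivFunOnFinite.symm f) 1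

/-- `lr` is the family of Littlewood–Richardson coefficients: for all partitions
`α`, `β`, the product of the Schur polynomials `s_α s_β` (in any number `N` of
variables containing the supports) equals `∑_γ lr α β γ • s_γ`, the sum running
over all partitions `γ` of size `|α| + |β|` with at most `N` parts. -/
noncomputable def IsLR (lr : (ℕ → ℕ) → (ℕ → ℕ) → (ℕ → ℕ) → ℕ) : Prop :=
  ∀ (N : ℕ) (al be : ℕ → ℕ), Antitone al → Antitone be →
    (∀ i, N ≤ i → al i = 0) → (∀ i, N ≤ i → be i = 0) →
    schurP N (∑ i ∈ Finset.range N, al i) al *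
        schurP N (∑ i ∈ Finset.range N, be i) be =
      ∑ g ∈ (Fintype.piFinset fun _ : Fin N =>
            Finset.range ((∑ i ∈ Finset.range N, al i) + (∑ i ∈ Finset.range N, be i) + 1)) |>.filter
          (fun g => (∀ i j : Fin N, i ≤ j → g j ≤ g i) ∧
            ∑ i, g i = (∑ i ∈ Finset.range N, al i) + (∑ i ∈ Finset.range N, be i)),
        (lr al be (extF g) : ℤ) •
          schurP N ((∑ i ∈ Finset.range N, al i) + (∑ i ∈ Finset.range N, be i)) (extF g)

/-- The polynomial `tS_λ(x) = ∑_μ #CT₀(λ,μ) x^μ`, summed over all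
`r`-compositions `μ` of size `d`, in the variables `x^{(k)}_i`. -/
noncomputable def tS (d : ℕ) (lam : MComp r m) : MvPolynomial (Entry r m) ℤ :=
  ∑ f ∈ (Fintype.piFinset fun _ : Entry r m => Finset.range (d + 1)) |>.filter
      (fun f => ∑ e, f e = d),
    (nCT lam (fun k i => f ⟨k, i⟩) : ℤ) •
      MvPolynomial.monomial (Finsupp.equivFunOnFinite.symm f) 1

/-- `S_μ(x) = ∏_k s_{μ^{(k)}}(x^{(k)})`, the product of Schur polynomials. -/
noncomputable def SchurProd (mu : MComp r m) : MvPolynomial (Entry r m) ℤ :=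
  ∏ k : Fin r, MvPolynomial.rename (fun i : Fin (m k) => (⟨k, i⟩ : Entry r m))
    (schurP (m k) (∑ i, mu k i) (extF (mu k)))

/-- Membership in `Θ(λ,μ)`: a chain `λ = λ_{⟨r⟩} ⊇ … ⊇ λ_{⟨0⟩} = ∅` of
`r`-partitions with `(λ_{⟨k⟩})^{(k+1)} = ∅` for `1 ≤ k ≤ r-1` and
`|λ_{⟨k⟩}| - |λ_{⟨k-1⟩}| = |μ^{(k)}|` for `1 ≤ k ≤ r`. -/
def IsTheta (lam mu : MComp r m) (L : Fin (r + 1) → MComp r m) : Prop :=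
  (∀ κ, IsMPartition (L κ)) ∧
  L (Fin.last r) = lam ∧
  (∀ (c : Fin r) (i : Fin (m c)), L 0 c i = 0) ∧
  (∀ (k : Fin r) (c : Fin r) (i : Fin (m c)), L k.castSucc c i ≤ L k.succ c i) ∧
  (∀ (k : ℕ) (h : k < r), 1 ≤ k →
    ∀ i : Fin (m ⟨k, h⟩), L ⟨k, Nat.lt_succ_of_lt h⟩ ⟨k, h⟩ i = 0) ∧
  (∀ k : Fin r, size (L k.succ) = size (L k.castSucc) + ∑ i, mu k i)

/-- The multicomposition `(∅, …, ∅, w, ∅, …, ∅)` concentrated in component `k`. -/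
def unitWeight (k : Fin r) (w : Fin (m k) → ℕ) : MComp r m :=
  fun c i => if h : c = k then w (Fin.cast (congrArg m h) i) else 0

/-- The index in `Fin r` of the `j`-th member of the `k`-th block, for blocks of
sizes `rs 0, …, rs (g-1)` with `∑ rs = r`. -/
def blockIdx {g : ℕ} (rs : Fin g → ℕ) (hsum : ∑ l, rs l = r) (k : Fin g) (j : Fin (rs k)) :
    Fin r :=
  ⟨(∑ l ∈ Finset.univ.filter (fun l => l < k), rs l) + j, by
    classical
    have hj := j.isLt
    have h1 : (∑ l ∈ Finset.univ.filter (fun l => l < k), rs l) + rs k ≤ ∑ l, rs l := by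
      have hk : k ∉ Finset.univ.filter (fun l => l < k) := by simp
      have h2 : (∑ l ∈ insert k (Finset.univ.filter (fun l => l < k)), rs l)
          = (∑ l ∈ Finset.univ.filter (fun l => l < k), rs l) + rs k := by
        rw [Finset.sum_insert hk]; ring
      rw [← h2]
      exact Finset.sum_le_sum_of_subset (Finset.subset_univ _)
    omega⟩

/-- The permutation of the variables `x^{(k)}_i` within the `k`-th set induced
by `σ ∈ S_{m_k}`. -/
def blockPermFun (k : Fin r) (sg : Equiv.Perm (Fin (m k))) : Entry r m → Entry r m :=
  fun e => if h : e.1 = k then ⟨k, sg (Fin.cast (congrArg m h) e.2)⟩ else e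


/-- The boxes of the diagram of `lam` form a finite type of size `size lam`. -/
def diagEquiv (lam : MComp r m) :
    {x : Box r m // InDiag lam x} ≃ Σ k : Fin r, Σ i : Fin (m k), Fin (lam k i) where
  toFun x := ⟨x.1.1, x.1.2.1, ⟨x.1.2.2, x.2⟩⟩
  invFun s := ⟨⟨s.1, s.2.1, s.2.2.1⟩, s.2.2.2⟩
  left_inv x := rfl
  right_inv s := rfl

lemma card_diag (lam : MComp r m) :
    Nat.card {x : Box r m // InDiag lam x} = size lam := by
  rw [Nat.card_congr (diagEquiv lam), Nat.card_eq_fintype_card]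
  simp [size, Fintype.card_sigma]

lemma entry_ext {e f : Entry r m} (h1 : (e.1 : ℕ) = (f.1 : ℕ))
    (h2 : (e.2 : ℕ) = (f.2 : ℕ)) : e = f := by
  obtain ⟨c, a⟩ := e
  obtain ⟨c', a'⟩ := f
  simp only at h1 h2
  have hc : c = c' := Fin.ext h1
  subst hc
  exact congrArg (Sigma.mk c) (Fin.ext h2)

/-- For `μ = (∅, …, ∅, (n))`: `β_{λμ} = 1` if `λ = ((n₁), …, (n_r))` with
`n₁ + … + n_r = n`, and `β_{λμ} = 0` otherwise. -/
theorem beta_row_last (r n : ℕ) (hr : 1 ≤ r) (m : Fin r → ℕ) (hm : ∀ k, n ≤ m k)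
    (mu : MComp r m)
    (hmudef : ∀ k i, mu k i = if (k : ℕ) = r - 1 ∧ (i : ℕ) = 0 then n else 0)
    (lam : MComp r m) (hlam : IsMPartition lam) (hlams : size lam = n) :
    ((∃ ns : Fin r → ℕ, (∑ k, ns k = n) ∧
        ∀ k i, lam k i = if (i : ℕ) = 0 then ns k else 0) → beta lam mu = 1) ∧
    ((¬ ∃ ns : Fin r → ℕ, (∑ k, ns k = n) ∧
        ∀ k i, lam k i = if (i : ℕ) = 0 then ns k else 0) → beta lam mu = 0) := by
  classical
  have hfin : Finite {x : Box r m // InDiag lam x} :=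
    Finite.of_equiv _ (diagEquiv lam).symm
  have hcard : Nat.card {x : Box r m // InDiag lam x} = n := by
    rw [card_diag]; exact hlams
  by_cases hn : n = 0
  · -- empty diagram case
    subst hn
    have hempty : IsEmpty {x : Box r m // InDiag lam x} := by
      rcases Nat.card_eq_zero.mp hcard with h | h
      · exact h
      · exact absurd hfin h.not_finite
    have hlz : ∀ k i, lam k i = 0 := by
      have h := hlams
      unfold size at h
      intro k i
      have h1 := (Finset.sum_eq_zero_iff.mp h) k (Finset.mem_univ k)
      exact (Finset.sum_eq_zero_iff.mp h1) i (Finset.mem_univ i)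
    have hmuz : ∀ k i, mu k i = 0 := by
      intro k i; rw [hmudef]; split <;> rfl
    have hbeta1 : beta lam mu = 1 := by
      unfold beta nSingSST
      rw [Nat.card_eq_one_iff_unique]
      constructor
      · constructor
        intro T T'
        exact Subtype.ext (funext fun x => isEmptyElim x)
      · refine ⟨⟨fun x => isEmptyElim x, ⟨?_, ?_, ?_, ?_⟩, ?_⟩⟩
        · exact fun x => isEmptyElim x
        · exact fun x => isEmptyElim x
        · exact fun x => isEmptyElim x
        · intro e
          rw [hmuz]
          exact (Nat.card_eq_zero.mpr (Or.inl ⟨fun y => isEmptyElim y.1⟩)).symm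
        · exact fun b => isEmptyElim b
    constructor
    · intro _; exact hbeta1
    · intro h
      exact absurd ⟨fun _ => 0, by simp, fun k i => by rw [hlz k i]; simp⟩ h
  · -- nonempty case: n ≥ 1
    have he1 : r - 1 < r := by omega
    have he2 : 0 < m ⟨r - 1, he1⟩ := by have := hm ⟨r - 1, he1⟩; omega
    let e0 : Entry r m := ⟨⟨r - 1, he1⟩, ⟨0, he2⟩⟩
    -- every semistandard tableau is constant with value e0
    have hconst : ∀ (T : {x : Box r m // InDiag lam x} → Entry r m),
        IsSST (InDiag lam) mu T → ∀ x, T x = e0 := by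
      intro T hT x
      have hw := hT.weight (T x)
      have h1 := hmudef (T x).1 (T x).2
      rw [hw] at h1
      have hpos : 0 < Nat.card {y : {x : Box r m // InDiag lam x} // T y = T x} :=
        @Nat.card_pos _ ⟨⟨x, rfl⟩⟩ _
      have hcond : ((T x).1 : ℕ) = r - 1 ∧ ((T x).2 : ℕ) = 0 := by
        by_contra hc
        rw [if_neg hc] at h1
        omega
      exact entry_ext hcond.1 hcond.2
    -- if lam is one-row, the constant tableau is singular semistandard
    have hsst_const : (∀ k (i : Fin (m k)), 1 ≤ (i : ℕ) → lam k i = 0) →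
        IsSST (InDiag lam) mu (fun _ => e0) ∧ IsSingular (InDiag lam) (fun _ => e0) := by
      intro hrow
      refine ⟨⟨?_, ?_, ?_, ?_⟩, ?_⟩
      · intro x
        have := x.1.1.isLt
        show (x.1.1 : ℕ) ≤ r - 1
        omega
      · intro x y _ _ _
        exact Or.inr ⟨rfl, le_refl _⟩
      · intro x y hk hi hj
        exfalso
        have hy := y.2
        have h0 : lam y.1.1 y.1.2.1 = 0 := by
          apply hrow
          omega
        unfold InDiag at hy
        omega
      · intro e
        by_cases he : e = e0
        · subst he
          rw [hmudef]
          rw [if_pos ⟨rfl, rfl⟩]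
          rw [Nat.card_congr (Equiv.subtypeUnivEquiv (fun x => rfl))]
          exact hcard.symm
        · rw [hmudef]
          rw [if_neg (fun hc => he (entry_ext hc.1 hc.2))]
          refine (Nat.card_eq_zero.mpr (Or.inl ⟨fun y => he y.2.symm⟩)).symm
      · intro b a
        have hemp : IsEmpty {y : {x : Box r m // InDiag lam x} //
            ((fun _ => e0) y).1 = ((fun _ => e0) b).1 ∧ BoxGE y.1 b.1 ∧
              (((fun _ => e0) y).2 : ℕ) = a + 1} :=
          ⟨fun y => by have h := y.2.2.2; exact Nat.succ_ne_zero a h.symm⟩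
        rw [Nat.card_eq_zero.mpr (Or.inl hemp)]
        exact Nat.zero_le _
    constructor
    · rintro ⟨ns, hsum, hns⟩
      have hrow : ∀ k (i : Fin (m k)), 1 ≤ (i : ℕ) → lam k i = 0 := by
        intro k i h
        rw [hns k i, if_neg (by omega)]
      unfold beta nSingSST
      rw [Nat.card_eq_one_iff_unique]
      constructor
      · constructor
        intro T T'
        refine Subtype.ext (funext fun x => ?_)
        rw [hconst T.1 T.2.1 x, hconst T'.1 T'.2.1 x]
      · exact ⟨⟨fun _ => e0, hsst_const hrow⟩⟩
    · intro hno
      unfold beta nSingSST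
      rw [Nat.card_eq_zero]
      left
      constructor
      rintro ⟨T, hT, -⟩
      apply hno
      have hrow : ∀ k (i : Fin (m k)), 1 ≤ (i : ℕ) → lam k i = 0 := by
        intro k i h1
        by_contra hpos
        have hi' : (i : ℕ) - 1 < m k := by have := i.isLt; omega
        have hx : InDiag lam ⟨k, (⟨(i : ℕ) - 1, hi'⟩, 0)⟩ := by
          show 0 < lam k ⟨(i : ℕ) - 1, hi'⟩
          have hmono := hlam k (show (⟨(i : ℕ) - 1, hi'⟩ : Fin (m k)) ≤ i by
            rw [Fin.le_def]; show (i : ℕ) - 1 ≤ (i : ℕ); omega)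
          omega
        have hy : InDiag lam ⟨k, (i, 0)⟩ := by
          show 0 < lam k i
          omega
        have hcs := hT.col_strict ⟨⟨k, (⟨(i : ℕ) - 1, hi'⟩, 0)⟩, hx⟩ ⟨⟨k, (i, 0)⟩, hy⟩
          rfl (by simp; omega) rfl
        rw [hconst T hT, hconst T hT] at hcs
        rcases hcs with h | ⟨-, h⟩ <;> exact lt_irrefl _ h
      refine ⟨fun k => lam k ⟨0, by have := hm k; omega⟩, ?_, ?_⟩
      · conv_rhs => rw [← hlams]
        unfold size
        apply Finset.sum_congr rfl
        intro k _
        refine (Fintype.sum_eq_single _ ?_).symm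
        intro i hi
        apply hrow
        by_contra hc
        exact hi (Fin.ext (show (i : ℕ) = 0 by omega))
      · intro k i
        by_cases h0 : (i : ℕ) = 0
        · rw [if_pos h0]
          congr 1
          exact Fin.ext h0
        · rw [if_neg h0]
          exact hrow k i (by omega)


end CQSA
end

section
/- For all r-partitions λ, μ of size n, β_{λμ} = Σ_{chains in Θ(λ,μ)} Π_{k=1}^r #{singular semistandard tableaux of skew shape λ_{⟨k⟩}/λ_{⟨k−1⟩} and weight (∅,…,∅,μ^{(k)},∅,…,∅), with μ^{(k)} in position k}. -/
open scoped BigOperators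

namespace CQSA

variable {r : ℕ} {m : Fin r → ℕ}

/-! ### Auxiliary material for the proof -/

section Aux

variable {r : ℕ} {m : Fin r → ℕ}

lemma nat_eq_of_lt_iff {a b : ℕ} (h : ∀ j, j < a ↔ j < b) : a = b := by
  rcases lt_trichotomy a b with h' | h' | h'
  · exact absurd ((h a).2 h') (lt_irrefl a)
  · exact h'
  · exact absurd ((h b).1 h') (lt_irrefl b)

lemma entryLE_fst {e f : Entry r m} (h : entryLE e f) : (e.1 : ℕ) ≤ (f.1 : ℕ) := by
  rcases h with h | ⟨h, _⟩ <;> omega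

lemma entryLT_fst {e f : Entry r m} (h : entryLT e f) : (e.1 : ℕ) ≤ (f.1 : ℕ) := by
  rcases h with h | ⟨h, _⟩ <;> omega

/-- The diagram of a multicomposition is finite. -/
instance finite_diag (nu : MComp r m) : Finite {x : Box r m // InDiag nu x} := by
  apply Finite.of_injective (β := Σ p : (Σ k : Fin r, Fin (m k)), Fin (nu p.1 p.2))
    (fun x => ⟨⟨x.1.1, x.1.2.1⟩, ⟨x.1.2.2, x.2⟩⟩)
  intro x y h
  apply Subtype.ext
  exact congrArg (fun q : Σ p : (Σ k : Fin r, Fin (m k)), Fin (nu p.1 p.2) =>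
    (⟨q.1.1, (q.1.2, (q.2 : ℕ))⟩ : Box r m)) h

instance finite_skew (a b : MComp r m) : Finite {x : Box r m // SkewD a b x} := by
  apply Finite.of_injective (fun x : {x : Box r m // SkewD a b x} =>
    (⟨x.1, x.2.1⟩ : {x : Box r m // InDiag a x}))
  intro x y h
  have := congrArg Subtype.val h
  exact Subtype.ext this

instance fintype_natlt (t : ℕ) : Fintype {j : ℕ // j < t} :=
  Fintype.ofEquiv (Fin t) Fin.equivSubtype

lemma nat_card_natlt (t : ℕ) : Nat.card {j : ℕ // j < t} = t := by
  have := Nat.card_congr (Fin.equivSubtype (n := t))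
  simpa using this.symm

lemma nat_card_sigma {ι : Type*} [Fintype ι] (f : ι → Type*) [∀ i, Finite (f i)] :
    Nat.card (Σ i, f i) = ∑ i, Nat.card (f i) := by
  letI : ∀ i, Fintype (f i) := fun i => Fintype.ofFinite _
  simp [Nat.card_eq_fintype_card]

lemma nat_card_subtype {α : Type*} [Fintype α] (p : α → Prop) [DecidablePred p] :
    Nat.card {x // p x} = (Finset.univ.filter p).card := by
  rw [Nat.card_eq_fintype_card, Fintype.card_subtype]

lemma comp_eq_iff {k : Fin r} (e : Entry r m) : e.1 = k ↔ ∃ i : Fin (m k), e = ⟨k, i⟩ := by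
  constructor
  · intro h; obtain ⟨c, a⟩ := e; dsimp only at h; subst h; exact ⟨a, rfl⟩
  · rintro ⟨i, rfl⟩; rfl

lemma unitWeight_self (k : Fin r) (w : Fin (m k) → ℕ) (i : Fin (m k)) :
    unitWeight k w k i = w i := by
  simp only [unitWeight, dif_pos rfl]
  rfl

/-- Every entry of a semistandard tableau of weight `unitWeight k w` has component `k`. -/
lemma comp_of_unit {D : Box r m → Prop} [Finite {x : Box r m // D x}] {k : Fin r}
    {w : Fin (m k) → ℕ} {U : {x : Box r m // D x} → Entry r m}
    (hU : IsSST D (unitWeight k w) U) (z : {x : Box r m // D x}) : (U z).1 = k := by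
  by_contra hne
  have hw := hU.weight (U z)
  have h0 : unitWeight k w (U z).1 (U z).2 = 0 := dif_neg hne
  rw [h0] at hw
  have hpos : 0 < Nat.card {x : {x : Box r m // D x} // U x = U z} := by
    haveI : Nonempty {x : {x : Box r m // D x} // U x = U z} := ⟨⟨z, rfl⟩⟩
    exact Nat.card_pos
  omega

end Aux

section Lev

variable {r : ℕ} {m : Fin r → ℕ}

/-- The box in component `c`, row `i`, column `j`. -/
def boxAt (c : Fin r) (i : Fin (m c)) (j : ℕ) : Box r m := ⟨c, (i, j)⟩

/-- The box `(c,i,j)` lies in the diagram and its entry has component `< κ`. -/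
def rowP (lam : MComp r m) (T : {x : Box r m // InDiag lam x} → Entry r m)
    (κ : ℕ) (c : Fin r) (i : Fin (m c)) (j : ℕ) : Prop :=
  ∃ h : InDiag lam (boxAt c i j), ((T ⟨boxAt c i j, h⟩).1 : ℕ) < κ

open Classical in
/-- The number of boxes in row `(c,i)` whose entry has component `< κ`. -/
noncomputable def lev (lam : MComp r m) (T : {x : Box r m // InDiag lam x} → Entry r m)
    (κ : ℕ) : MComp r m :=
  fun c i => ((Finset.range (lam c i)).filter (rowP lam T κ c i)).sup (· + 1)

/-- The chain of multipartitions associated to a tableau. -/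
noncomputable def Lchain (lam : MComp r m) (T : {x : Box r m // InDiag lam x} → Entry r m) :
    Fin (r + 1) → MComp r m :=
  fun κ => lev lam T (κ : ℕ)

variable {lam mu : MComp r m} {T : {x : Box r m // InDiag lam x} → Entry r m}

lemma rowP_le {κ : ℕ} {c : Fin r} {i : Fin (m c)} {j : ℕ}
    (h : rowP lam T κ c i j) : j < lam c i := h.1

lemma rowP_mono_kappa {κ κ' : ℕ} (h : κ ≤ κ') {c : Fin r} {i : Fin (m c)} {j : ℕ} :
    rowP lam T κ c i j → rowP lam T κ' c i j :=
  fun ⟨hd, hk⟩ => ⟨hd, lt_of_lt_of_le hk h⟩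

lemma rowP_step (hT : IsSST (InDiag lam) mu T) {κ : ℕ} {c : Fin r} {i : Fin (m c)} {j : ℕ} :
    rowP lam T κ c i (j + 1) → rowP lam T κ c i j := by
  rintro ⟨hd, hk⟩
  have hd' : InDiag lam (boxAt c i j) := Nat.lt_of_succ_lt hd
  refine ⟨hd', ?_⟩
  have := hT.row_weak ⟨boxAt c i j, hd'⟩ ⟨boxAt c i (j + 1), hd⟩ rfl rfl rfl
  exact lt_of_le_of_lt (entryLE_fst this) hk

lemma rowP_mono_j (hT : IsSST (InDiag lam) mu T) {κ : ℕ} {c : Fin r} {i : Fin (m c)} {j : ℕ} :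
    ∀ j', j ≤ j' → rowP lam T κ c i j' → rowP lam T κ c i j := by
  intro j'
  induction j' with
  | zero => intro h1 h2; exact (Nat.le_zero.mp h1) ▸ h2
  | succ n ih =>
    intro h1 h2
    rcases Nat.eq_or_lt_of_le h1 with rfl | hlt
    · exact h2
    · exact ih (by omega) (rowP_step hT h2)

lemma lt_lev_iff (hT : IsSST (InDiag lam) mu T) {κ : ℕ} {c : Fin r} {i : Fin (m c)} {j : ℕ} :
    j < lev lam T κ c i ↔ rowP lam T κ c i j := by
  classical
  constructor
  · intro h
    simp only [lev] at h
    obtain ⟨j', hj', hlt⟩ := Finset.lt_sup_iff.mp h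
    exact rowP_mono_j hT j' (by omega) (Finset.mem_filter.mp hj').2
  · intro h
    have hj : j ∈ (Finset.range (lam c i)).filter (rowP lam T κ c i) :=
      Finset.mem_filter.mpr ⟨Finset.mem_range.mpr (rowP_le h), h⟩
    have h2 : j + 1 ≤ ((Finset.range (lam c i)).filter (rowP lam T κ c i)).sup (· + 1) :=
      Finset.le_sup (f := (· + 1)) hj
    simp only [lev]
    omega

lemma rowP_col_step (hT : IsSST (InDiag lam) mu T) (hlam : IsMPartition lam)
    {κ : ℕ} {c : Fin r} {i i' : Fin (m c)} {j : ℕ} (hii : (i : ℕ) + 1 = (i' : ℕ)) :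
    rowP lam T κ c i' j → rowP lam T κ c i j := by
  rintro ⟨hd, hk⟩
  have hle : i ≤ i' := by rw [Fin.le_def]; omega
  have hd' : InDiag lam (boxAt c i j) := lt_of_lt_of_le hd (hlam c hle)
  have := hT.col_strict ⟨boxAt c i j, hd'⟩ ⟨boxAt c i' j, hd⟩ rfl hii rfl
  exact ⟨hd', lt_of_le_of_lt (entryLT_fst this) hk⟩

lemma rowP_mono_i (hT : IsSST (InDiag lam) mu T) (hlam : IsMPartition lam)
    {κ : ℕ} {c : Fin r} {j : ℕ} :
    ∀ (d : ℕ) (i i' : Fin (m c)), (i : ℕ) + d = (i' : ℕ) →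
      rowP lam T κ c i' j → rowP lam T κ c i j := by
  intro d
  induction d with
  | zero =>
    intro i i' h hp
    exact (show i = i' from Fin.ext (by omega)) ▸ hp
  | succ n ih =>
    intro i i' h hp
    have hlt : (i : ℕ) + n < m c := lt_of_le_of_lt (by omega) i'.isLt
    exact ih i ⟨(i : ℕ) + n, hlt⟩ rfl
      (rowP_col_step hT hlam (by simp only []; omega) hp)

lemma lev_mono_kappa (hT : IsSST (InDiag lam) mu T) {κ κ' : ℕ} (h : κ ≤ κ')
    {c : Fin r} {i : Fin (m c)} : lev lam T κ c i ≤ lev lam T κ' c i := by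
  by_contra hc
  push_neg at hc
  have h1 := (lt_lev_iff hT).mp hc
  have h2 := (lt_lev_iff hT).mpr (rowP_mono_kappa h h1)
  omega

lemma lev_anti_i (hT : IsSST (InDiag lam) mu T) (hlam : IsMPartition lam)
    {κ : ℕ} {c : Fin r} {i i' : Fin (m c)} (h : i ≤ i') :
    lev lam T κ c i' ≤ lev lam T κ c i := by
  by_contra hc
  push_neg at hc
  have h1 := (lt_lev_iff hT).mp hc
  have h2 := (lt_lev_iff hT).mpr
    (rowP_mono_i hT hlam ((i' : ℕ) - (i : ℕ)) i i' (by rw [Fin.le_def] at h; omega) h1)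
  omega

/-- Counting the boxes whose entry has component `< κ`. -/
lemma card_rowlt (hT : IsSST (InDiag lam) mu T) (κ : ℕ) :
    Nat.card {x : {x : Box r m // InDiag lam x} // ((T x).1 : ℕ) < κ} = size (lev lam T κ) := by
  have E : {x : {x : Box r m // InDiag lam x} // ((T x).1 : ℕ) < κ} ≃
      Σ c : Fin r, Σ i : Fin (m c), {j : ℕ // j < lev lam T κ c i} :=
    { toFun := fun x => ⟨x.1.1.1, x.1.1.2.1,
        ⟨x.1.1.2.2, (lt_lev_iff hT).mpr ⟨x.1.2, x.2⟩⟩⟩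
      invFun := fun p =>
        ⟨⟨⟨p.1, (p.2.1, p.2.2.1)⟩, ((lt_lev_iff hT).mp p.2.2.2).choose⟩,
          ((lt_lev_iff hT).mp p.2.2.2).choose_spec⟩
      left_inv := fun x => rfl
      right_inv := fun p => rfl }
  rw [Nat.card_congr E, nat_card_sigma]
  simp only [nat_card_sigma, nat_card_natlt]
  rfl

/-- Counting the boxes whose entry has component `= k`. -/
lemma card_compeq (hT : IsSST (InDiag lam) mu T) (k : Fin r) :
    Nat.card {x : {x : Box r m // InDiag lam x} // (T x).1 = k} = ∑ i, mu k i := by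
  classical
  haveI : Fintype {x : Box r m // InDiag lam x} := Fintype.ofFinite _
  rw [nat_card_subtype]
  have hsplit : Finset.univ.filter (fun x : {x : Box r m // InDiag lam x} => (T x).1 = k) =
      Finset.univ.biUnion (fun i : Fin (m k) =>
        Finset.univ.filter (fun x : {x : Box r m // InDiag lam x} => T x = ⟨k, i⟩)) := by
    ext x
    simp only [Finset.mem_filter, Finset.mem_univ, true_and, Finset.mem_biUnion]
    rw [comp_eq_iff]
  rw [hsplit, Finset.card_biUnion]
  · apply Finset.sum_congr rfl
    intro i _
    rw [← nat_card_subtype]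
    exact (hT.weight ⟨k, i⟩).symm
  · intro i _ j _ hij
    rw [Function.onFun, Finset.disjoint_left]
    intro x hx hy
    simp only [Finset.mem_filter, Finset.mem_univ, true_and] at hx hy
    rw [hx] at hy
    exact hij (by simpa [Sigma.mk.inj_iff] using hy)

lemma card_split (k : Fin r) :
    Nat.card {x : {x : Box r m // InDiag lam x} // ((T x).1 : ℕ) < (k : ℕ) + 1} =
      Nat.card {x : {x : Box r m // InDiag lam x} // ((T x).1 : ℕ) < (k : ℕ)} +
        Nat.card {x : {x : Box r m // InDiag lam x} // (T x).1 = k} := by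
  classical
  have E1 : {x : {x : Box r m // InDiag lam x} // ((T x).1 : ℕ) < (k : ℕ) + 1} ≃
      {x : {x : Box r m // InDiag lam x} //
        ((T x).1 : ℕ) < (k : ℕ) ∨ (T x).1 = k} := by
    apply Equiv.subtypeEquivRight
    intro x
    constructor
    · intro h
      rcases Nat.lt_or_ge ((T x).1 : ℕ) (k : ℕ) with h' | h'
      · exact Or.inl h'
      · exact Or.inr (Fin.ext (by omega))
    · rintro (h | h)
      · omega
      · have : ((T x).1 : ℕ) = (k : ℕ) := congrArg Fin.val h
        omega
  rw [Nat.card_congr E1]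
  have hdisj : Disjoint (fun x : {x : Box r m // InDiag lam x} => ((T x).1 : ℕ) < (k : ℕ))
      (fun x : {x : Box r m // InDiag lam x} => (T x).1 = k) := by
    rw [Pi.disjoint_iff]
    intro x
    rw [Prop.disjoint_iff]
    rintro ⟨h1, h2⟩
    have : ((T x).1 : ℕ) = (k : ℕ) := congrArg Fin.val h2
    omega
  rw [Nat.card_congr (subtypeOrEquiv _ _ hdisj), Nat.card_sum]

end Lev

section Theta

variable {r : ℕ} {m : Fin r → ℕ} {lam mu : MComp r m} {C : Fin (r + 1) → MComp r m}

lemma theta_mono (hC : IsTheta lam mu C) {κ κ' : Fin (r + 1)} (h : κ ≤ κ')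
    (c : Fin r) (i : Fin (m c)) : C κ c i ≤ C κ' c i := by
  have key : ∀ (d : ℕ) (κ κ' : Fin (r + 1)), (κ : ℕ) + d = (κ' : ℕ) →
      C κ c i ≤ C κ' c i := by
    intro d
    induction d with
    | zero =>
      intro κ κ' hd
      rw [show κ = κ' from Fin.ext (by omega)]
    | succ n ih =>
      intro κ κ' hd
      have hr2 : (κ : ℕ) + n < r := by have := κ'.isLt; omega
      set k : Fin r := ⟨(κ : ℕ) + n, hr2⟩ with hk
      have h1 : C k.castSucc c i ≤ C k.succ c i := hC.2.2.2.1 k c i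
      have hcs : k.castSucc = (⟨(κ : ℕ) + n, by omega⟩ : Fin (r + 1)) := rfl
      have hsc : k.succ = κ' := Fin.ext (by simp [hk, Fin.val_succ]; omega)
      rw [hcs, hsc] at h1
      exact le_trans (ih κ ⟨(κ : ℕ) + n, by omega⟩ rfl) h1
  exact key ((κ' : ℕ) - (κ : ℕ)) κ κ' (by rw [Fin.le_def] at h; omega)

lemma theta_le_lam (hC : IsTheta lam mu C) (κ : Fin (r + 1)) (c : Fin r) (i : Fin (m c)) :
    C κ c i ≤ lam c i := by
  have := theta_mono hC (Fin.le_last κ) c i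
  rwa [hC.2.1] at this

lemma indiag_mono (hC : IsTheta lam mu C) {κ κ' : Fin (r + 1)} (h : κ ≤ κ')
    {x : Box r m} (hx : InDiag (C κ) x) : InDiag (C κ') x :=
  lt_of_lt_of_le hx (theta_mono hC h x.1 x.2.1)

lemma exists_skew (hC : IsTheta lam mu C) {x : Box r m} (hx : InDiag lam x) :
    ∃ k : Fin r, SkewD (C k.succ) (C k.castSucc) x := by
  classical
  have hex : ∃ n : ℕ, ∃ h : n < r + 1, InDiag (C ⟨n, h⟩) x :=
    ⟨r, Nat.lt_succ_self r, by
      show InDiag (C (Fin.last r)) x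
      rw [hC.2.1]; exact hx⟩
  let n0 := Nat.find hex
  obtain ⟨hlt, hin⟩ : ∃ h : n0 < r + 1, InDiag (C ⟨n0, h⟩) x := Nat.find_spec hex
  have hpos : 1 ≤ n0 := by
    by_contra h0
    have he : (⟨n0, hlt⟩ : Fin (r + 1)) = 0 := Fin.ext (by simp; omega)
    rw [he] at hin
    have hz := hC.2.2.1 x.1 x.2.1
    simp only [InDiag, hz] at hin
    exact Nat.not_lt_zero _ hin
  refine ⟨⟨n0 - 1, by omega⟩, ?_, ?_⟩
  · have hs : (⟨n0 - 1, by omega⟩ : Fin r).succ = ⟨n0, hlt⟩ := Fin.ext (by simp; omega)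
    rw [hs]; exact hin
  · intro hcon
    have hmin := Nat.find_min hex (m := n0 - 1) (by omega)
    exact hmin ⟨by omega, hcon⟩

lemma skew_unique (hC : IsTheta lam mu C) {x : Box r m} {k k' : Fin r}
    (h1 : SkewD (C k.succ) (C k.castSucc) x) (h2 : SkewD (C k'.succ) (C k'.castSucc) x) :
    k = k' := by
  by_contra hne
  rcases lt_or_gt_of_ne hne with h | h
  · have hv : (k : ℕ) < (k' : ℕ) := h
    exact h2.2 (indiag_mono hC (show k.succ ≤ k'.castSucc by
      rw [Fin.le_def, Fin.val_succ, Fin.coe_castSucc]; omega) h1.1)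
  · have hv : (k' : ℕ) < (k : ℕ) := h
    exact h1.2 (indiag_mono hC (show k'.succ ≤ k.castSucc by
      rw [Fin.le_def, Fin.val_succ, Fin.coe_castSucc]; omega) h2.1)

/-- The chain associated to a semistandard tableau is in `Θ(λ,μ)`. -/
lemma isTheta_Lchain (hlam : IsMPartition lam) {T : {x : Box r m // InDiag lam x} → Entry r m}
    (hT : IsSST (InDiag lam) mu T) : IsTheta lam mu (Lchain lam T) := by
  refine ⟨?_, ?_, ?_, ?_, ?_, ?_⟩
  · intro κ c i i' h
    exact lev_anti_i hT hlam h
  · funext c i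
    apply nat_eq_of_lt_iff
    intro j
    constructor
    · intro h
      exact rowP_le ((lt_lev_iff hT).mp h)
    · intro h
      refine (lt_lev_iff hT).mpr ⟨h, ?_⟩
      simp only [Fin.val_last]
      exact (T ⟨boxAt c i j, h⟩).1.isLt
  · intro c i
    by_contra h
    obtain ⟨hd, hk⟩ := (lt_lev_iff hT).mp (Nat.pos_of_ne_zero h)
    simp at hk
  · intro k c i
    exact lev_mono_kappa hT
      (by rw [Fin.coe_castSucc, Fin.val_succ]; exact Nat.le_succ _)
  · intro k h h1 i
    by_contra hcon
    obtain ⟨hd, hk⟩ := (lt_lev_iff hT).mp (Nat.pos_of_ne_zero hcon)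
    have hcle : (k : ℕ) ≤ ((T ⟨boxAt ⟨k, h⟩ i 0, hd⟩).1 : ℕ) :=
      hT.comp_le ⟨boxAt ⟨k, h⟩ i 0, hd⟩
    have hk' : ((T ⟨boxAt ⟨k, h⟩ i 0, hd⟩).1 : ℕ) < k := hk
    omega
  · intro k
    have h1 : size (Lchain lam T k.succ) =
        Nat.card {x : {x : Box r m // InDiag lam x} // ((T x).1 : ℕ) < (k : ℕ) + 1} := by
      rw [card_rowlt hT]
      simp [Lchain, Fin.val_succ]
    have h2 : size (Lchain lam T k.castSucc) =
        Nat.card {x : {x : Box r m // InDiag lam x} // ((T x).1 : ℕ) < (k : ℕ)} := by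
      rw [card_rowlt hT]
      simp [Lchain]
    rw [h1, h2, card_split k, card_compeq hT k]

end Theta

section GlueRes

variable {r : ℕ} {m : Fin r → ℕ} {lam mu : MComp r m} {C : Fin (r + 1) → MComp r m}

lemma skew_inDiag (hC : IsTheta lam mu C) {k : Fin r} {x : Box r m}
    (h : SkewD (C k.succ) (C k.castSucc) x) : InDiag lam x :=
  lt_of_lt_of_le h.1 (theta_le_lam hC _ _ _)

/-- The block of a box: the unique `k` with `x ∈ [C (k+1)] \ [C k]`. -/
noncomputable def blk (hC : IsTheta lam mu C) (x : {x : Box r m // InDiag lam x}) : Fin r :=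
  (exists_skew hC x.2).choose

lemma blk_spec (hC : IsTheta lam mu C) (x : {x : Box r m // InDiag lam x}) :
    SkewD (C (blk hC x).succ) (C (blk hC x).castSucc) x.1 :=
  (exists_skew hC x.2).choose_spec

lemma blk_eq (hC : IsTheta lam mu C) {x : {x : Box r m // InDiag lam x}} {k : Fin r}
    (h : SkewD (C k.succ) (C k.castSucc) x.1) : blk hC x = k :=
  skew_unique hC (blk_spec hC x) h

lemma blk_lt_iff (hC : IsTheta lam mu C) (x : {x : Box r m // InDiag lam x})
    (κ : Fin (r + 1)) : ((blk hC x : ℕ) < (κ : ℕ)) ↔ InDiag (C κ) x.1 := by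
  constructor
  · intro h
    exact indiag_mono hC (show (blk hC x).succ ≤ κ by
      rw [Fin.le_def, Fin.val_succ]; omega) (blk_spec hC x).1
  · intro h
    by_contra h'
    push_neg at h'
    exact (blk_spec hC x).2 (indiag_mono hC (show κ ≤ (blk hC x).castSucc by
      rw [Fin.le_def, Fin.coe_castSucc]; omega) h)

lemma blk_cast (hC : IsTheta lam mu C) {x : {x : Box r m // InDiag lam x}} {k : Fin r}
    (h : blk hC x = k) : SkewD (C k.succ) (C k.castSucc) x.1 := by
  rw [← h]; exact blk_spec hC x

/-- Glue a family of skew tableaux into one tableau. -/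
noncomputable def glue (hC : IsTheta lam mu C)
    (Ts : ∀ k : Fin r, {x : Box r m // SkewD (C k.succ) (C k.castSucc) x} → Entry r m) :
    {x : Box r m // InDiag lam x} → Entry r m :=
  fun x => Ts (blk hC x) ⟨x.1, blk_spec hC x⟩

lemma ts_cast (Ts : ∀ k : Fin r, {x : Box r m // SkewD (C k.succ) (C k.castSucc) x} → Entry r m)
    {k k' : Fin r} (h : k = k') (x : Box r m)
    (p : SkewD (C k.succ) (C k.castSucc) x) (p' : SkewD (C k'.succ) (C k'.castSucc) x) :
    Ts k ⟨x, p⟩ = Ts k' ⟨x, p'⟩ := by subst h; rfl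

lemma glue_at (hC : IsTheta lam mu C)
    (Ts : ∀ k : Fin r, {x : Box r m // SkewD (C k.succ) (C k.castSucc) x} → Entry r m)
    {x : {x : Box r m // InDiag lam x}} {k : Fin r} (h : blk hC x = k)
    (p : SkewD (C k.succ) (C k.castSucc) x.1) :
    glue hC Ts x = Ts k ⟨x.1, p⟩ :=
  ts_cast Ts h x.1 (blk_spec hC x) p

lemma glue_comp (hC : IsTheta lam mu C)
    {Ts : ∀ k : Fin r, {x : Box r m // SkewD (C k.succ) (C k.castSucc) x} → Entry r m}
    (hTs : ∀ k, IsSST (SkewD (C k.succ) (C k.castSucc)) (unitWeight k (mu k)) (Ts k))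
    (x : {x : Box r m // InDiag lam x}) : (glue hC Ts x).1 = blk hC x :=
  comp_of_unit (hTs (blk hC x)) ⟨x.1, blk_spec hC x⟩

lemma glue_transfer (hC : IsTheta lam mu C)
    (Ts : ∀ k : Fin r, {x : Box r m // SkewD (C k.succ) (C k.castSucc) x} → Entry r m)
    (k : Fin r) (P : Box r m → Entry r m → Prop) :
    Nat.card {y : {x : Box r m // InDiag lam x} // blk hC y = k ∧ P y.1 (glue hC Ts y)} =
      Nat.card {z : {x : Box r m // SkewD (C k.succ) (C k.castSucc) x} // P z.1 (Ts k z)} := by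
  apply Nat.card_congr
  exact
    { toFun := fun y => ⟨⟨y.1.1, blk_cast hC y.2.1⟩, by
        have h := y.2.2
        rwa [glue_at hC Ts y.2.1 (blk_cast hC y.2.1)] at h⟩
      invFun := fun z => ⟨⟨z.1.1, skew_inDiag hC z.1.2⟩,
        blk_eq hC z.1.2, by
          rw [glue_at hC Ts (blk_eq hC z.1.2) z.1.2]
          exact z.2⟩
      left_inv := fun y => rfl
      right_inv := fun z => rfl }

lemma glue_isSST (hC : IsTheta lam mu C)
    {Ts : ∀ k : Fin r, {x : Box r m // SkewD (C k.succ) (C k.castSucc) x} → Entry r m}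
    (hTs : ∀ k, IsSST (SkewD (C k.succ) (C k.castSucc)) (unitWeight k (mu k)) (Ts k)) :
    IsSST (InDiag lam) mu (glue hC Ts) := by
  constructor
  case comp_le =>
    intro x
    exact (hTs (blk hC x)).comp_le ⟨x.1, blk_spec hC x⟩
  case row_weak =>
    rintro ⟨⟨cx, ix, jx⟩, hx⟩ ⟨⟨cy, iy, jy⟩, hy⟩ hc hrow hcol
    dsimp only at hc hrow hcol
    subst hc
    obtain rfl : ix = iy := Fin.ext hrow
    subst hcol
    set X : {x : Box r m // InDiag lam x} := ⟨⟨cx, (ix, jx)⟩, hx⟩ with hX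
    set Y : {x : Box r m // InDiag lam x} := ⟨⟨cx, (ix, jx + 1)⟩, hy⟩ with hY
    have hky : ∀ κ : Fin (r + 1), InDiag (C κ) Y.1 → InDiag (C κ) X.1 := by
      intro κ hyk
      have h1 : jx + 1 < C κ cx ix := hyk
      exact show jx < C κ cx ix by omega
    have hkle : ((blk hC X : ℕ)) ≤ (blk hC Y : ℕ) := by
      by_contra hlt
      push_neg at hlt
      have h3 : (blk hC Y).succ ≤ (blk hC X).castSucc := by
        rw [Fin.le_def, Fin.val_succ, Fin.coe_castSucc]; omega
      exact (blk_spec hC X).2 (indiag_mono hC h3 (hky _ (blk_spec hC Y).1))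
    rcases Nat.eq_or_lt_of_le hkle with heq | hlt
    · have heqf : blk hC X = blk hC Y := Fin.ext heq
      have py : SkewD (C (blk hC X).succ) (C (blk hC X).castSucc) Y.1 := by
        rw [heqf]; exact blk_spec hC Y
      rw [glue_at hC Ts rfl (blk_spec hC X), glue_at hC Ts heqf.symm py]
      exact (hTs _).row_weak ⟨X.1, blk_spec hC X⟩ ⟨Y.1, py⟩ rfl rfl rfl
    · refine Or.inl ?_
      rw [glue_comp hC hTs X, glue_comp hC hTs Y]
      exact hlt
  case col_strict =>
    rintro ⟨⟨cx, ix, jx⟩, hx⟩ ⟨⟨cy, iy, jy⟩, hy⟩ hc hrow hcol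
    dsimp only at hc hrow hcol
    subst hc
    subst hcol
    set X : {x : Box r m // InDiag lam x} := ⟨⟨cx, (ix, jx)⟩, hx⟩ with hX
    set Y : {x : Box r m // InDiag lam x} := ⟨⟨cx, (iy, jx)⟩, hy⟩ with hY
    have hky : ∀ κ : Fin (r + 1), InDiag (C κ) Y.1 → InDiag (C κ) X.1 := by
      intro κ hyk
      have h1 : jx < C κ cx iy := hyk
      exact lt_of_lt_of_le h1 (hC.1 κ cx (show ix ≤ iy by rw [Fin.le_def]; omega))
    have hkle : ((blk hC X : ℕ)) ≤ (blk hC Y : ℕ) := by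
      by_contra hlt
      push_neg at hlt
      have h3 : (blk hC Y).succ ≤ (blk hC X).castSucc := by
        rw [Fin.le_def, Fin.val_succ, Fin.coe_castSucc]; omega
      exact (blk_spec hC X).2 (indiag_mono hC h3 (hky _ (blk_spec hC Y).1))
    rcases Nat.eq_or_lt_of_le hkle with heq | hlt
    · have heqf : blk hC X = blk hC Y := Fin.ext heq
      have py : SkewD (C (blk hC X).succ) (C (blk hC X).castSucc) Y.1 := by
        rw [heqf]; exact blk_spec hC Y
      rw [glue_at hC Ts rfl (blk_spec hC X), glue_at hC Ts heqf.symm py]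
      exact (hTs _).col_strict ⟨X.1, blk_spec hC X⟩ ⟨Y.1, py⟩ rfl hrow rfl
    · refine Or.inl ?_
      rw [glue_comp hC hTs X, glue_comp hC hTs Y]
      exact hlt
  case weight =>
    intro e
    obtain ⟨c, a⟩ := e
    have e1 : Nat.card {x : {x : Box r m // InDiag lam x} //
          glue hC Ts x = (⟨c, a⟩ : Entry r m)} =
        Nat.card {x : {x : Box r m // InDiag lam x} //
          blk hC x = c ∧ glue hC Ts x = (⟨c, a⟩ : Entry r m)} := by
      apply Nat.card_congr
      apply Equiv.subtypeEquivRight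
      intro x
      constructor
      · intro h
        refine ⟨?_, h⟩
        have h2 := glue_comp hC hTs x
        rw [h] at h2
        exact h2.symm
      · exact fun h => h.2
    have h3 : Nat.card {z : {x : Box r m // SkewD (C c.succ) (C c.castSucc) x} //
        Ts c z = (⟨c, a⟩ : Entry r m)} = mu c a := by
      have hw : unitWeight c (mu c) c a =
          Nat.card {z : {x : Box r m // SkewD (C c.succ) (C c.castSucc) x} //
            Ts c z = (⟨c, a⟩ : Entry r m)} := (hTs c).weight ⟨c, a⟩
      rw [unitWeight_self] at hw
      exact hw.symm
    exact (e1.trans ((glue_transfer hC Ts c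
      (fun _ en => en = (⟨c, a⟩ : Entry r m))).trans h3)).symm

lemma glue_isSingular (hC : IsTheta lam mu C)
    {Ts : ∀ k : Fin r, {x : Box r m // SkewD (C k.succ) (C k.castSucc) x} → Entry r m}
    (hTs : ∀ k, IsSST (SkewD (C k.succ) (C k.castSucc)) (unitWeight k (mu k)) (Ts k))
    (hsing : ∀ k, IsSingular (SkewD (C k.succ) (C k.castSucc)) (Ts k)) :
    IsSingular (InDiag lam) (glue hC Ts) := by
  intro b a
  have key : ∀ v : ℕ,
      Nat.card {y : {x : Box r m // InDiag lam x} //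
        (glue hC Ts y).1 = (glue hC Ts b).1 ∧ BoxGE y.1 b.1 ∧ ((glue hC Ts y).2 : ℕ) = v} =
      Nat.card {z : {x : Box r m // SkewD (C (blk hC b).succ) (C (blk hC b).castSucc) x} //
        (Ts (blk hC b) z).1 = (glue hC Ts b).1 ∧ BoxGE z.1 b.1 ∧
          ((Ts (blk hC b) z).2 : ℕ) = v} := by
    intro v
    refine (Nat.card_congr (Equiv.subtypeEquivRight ?_)).trans
      (glue_transfer hC Ts (blk hC b)
        (fun bx en => en.1 = (glue hC Ts b).1 ∧ BoxGE bx b.1 ∧ (en.2 : ℕ) = v))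
    intro y
    constructor
    · rintro ⟨h1, h2⟩
      exact ⟨(glue_comp hC hTs y).symm.trans (h1.trans (glue_comp hC hTs b)), h1, h2⟩
    · rintro ⟨_, h1⟩
      exact h1
  rw [key (a + 1), key a]
  exact hsing (blk hC b) ⟨b.1, blk_spec hC b⟩ a

lemma lev_glue (hC : IsTheta lam mu C)
    {Ts : ∀ k : Fin r, {x : Box r m // SkewD (C k.succ) (C k.castSucc) x} → Entry r m}
    (hTs : ∀ k, IsSST (SkewD (C k.succ) (C k.castSucc)) (unitWeight k (mu k)) (Ts k))
    (hglue : IsSST (InDiag lam) mu (glue hC Ts)) (κ : Fin (r + 1)) :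
    lev lam (glue hC Ts) (κ : ℕ) = C κ := by
  funext c i
  apply nat_eq_of_lt_iff
  intro j
  constructor
  · intro h
    obtain ⟨hd, hlt⟩ := (lt_lev_iff hglue).mp h
    rw [glue_comp hC hTs ⟨boxAt c i j, hd⟩] at hlt
    exact (blk_lt_iff hC ⟨boxAt c i j, hd⟩ κ).1 hlt
  · intro h
    have hd : InDiag lam (boxAt c i j) := lt_of_lt_of_le h (theta_le_lam hC κ c i)
    refine (lt_lev_iff hglue).mpr ⟨hd, ?_⟩
    rw [glue_comp hC hTs ⟨boxAt c i j, hd⟩]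
    exact (blk_lt_iff hC ⟨boxAt c i j, hd⟩ κ).2 h

/-- Restriction of a tableau to a skew block of its chain. -/
noncomputable def res (hC : IsTheta lam mu C)
    (T : {x : Box r m // InDiag lam x} → Entry r m) (k : Fin r) :
    {x : Box r m // SkewD (C k.succ) (C k.castSucc) x} → Entry r m :=
  fun z => T ⟨z.1, skew_inDiag hC z.2⟩

lemma skew_iff {T : {x : Box r m // InDiag lam x} → Entry r m}
    (hT : IsSST (InDiag lam) mu T) (hL : ∀ κ, C κ = Lchain lam T κ) (k : Fin r)
    (x : Box r m) :
    SkewD (C k.succ) (C k.castSucc) x ↔ ∃ h : InDiag lam x, (T ⟨x, h⟩).1 = k := by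
  obtain ⟨c, i, j⟩ := x
  constructor
  · rintro ⟨hin, hnot⟩
    have h1 : j < lev lam T ((k : ℕ) + 1) c i := by rw [hL k.succ] at hin; exact hin
    obtain ⟨hd, hlt⟩ := (lt_lev_iff hT).mp h1
    have h2 : ¬ j < lev lam T (k : ℕ) c i := by rw [hL k.castSucc] at hnot; exact hnot
    rw [lt_lev_iff hT] at h2
    refine ⟨hd, Fin.ext ?_⟩
    have hge : ¬ ((T ⟨boxAt c i j, hd⟩).1 : ℕ) < (k : ℕ) := fun hcon => h2 ⟨hd, hcon⟩
    have hlt' : ((T ⟨boxAt c i j, hd⟩).1 : ℕ) < (k : ℕ) + 1 := hlt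
    show ((T ⟨boxAt c i j, hd⟩).1 : ℕ) = (k : ℕ)
    omega
  · rintro ⟨hd, hk⟩
    have hk' : ((T ⟨boxAt c i j, hd⟩).1 : ℕ) = (k : ℕ) := congrArg Fin.val hk
    constructor
    · show InDiag (C k.succ) (boxAt c i j)
      rw [hL k.succ]
      refine (lt_lev_iff hT).mpr ⟨hd, ?_⟩
      show ((T ⟨boxAt c i j, hd⟩).1 : ℕ) < (k : ℕ) + 1
      omega
    · intro hcon
      have h1 : j < lev lam T (k : ℕ) c i := by rw [hL k.castSucc] at hcon; exact hcon
      obtain ⟨hd2, hlt2⟩ := (lt_lev_iff hT).mp h1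
      have hlt2' : ((T ⟨boxAt c i j, hd⟩).1 : ℕ) < (k : ℕ) := hlt2
      omega

lemma res_transfer (hC : IsTheta lam mu C)
    {T : {x : Box r m // InDiag lam x} → Entry r m}
    (hT : IsSST (InDiag lam) mu T) (hL : ∀ κ, C κ = Lchain lam T κ) (k : Fin r)
    (P : Box r m → Entry r m → Prop) :
    Nat.card {y : {x : Box r m // InDiag lam x} // (T y).1 = k ∧ P y.1 (T y)} =
      Nat.card {z : {x : Box r m // SkewD (C k.succ) (C k.castSucc) x} //
        P z.1 (res hC T k z)} := by
  apply Nat.card_congr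
  exact
    { toFun := fun y => ⟨⟨y.1.1, (skew_iff hT hL k y.1.1).mpr ⟨y.1.2, y.2.1⟩⟩, y.2.2⟩
      invFun := fun z => ⟨⟨z.1.1, skew_inDiag hC z.1.2⟩,
        ((skew_iff hT hL k z.1.1).mp z.1.2).choose_spec, z.2⟩
      left_inv := fun y => rfl
      right_inv := fun z => rfl }

lemma res_isSST (hC : IsTheta lam mu C)
    {T : {x : Box r m // InDiag lam x} → Entry r m}
    (hT : IsSST (InDiag lam) mu T) (hL : ∀ κ, C κ = Lchain lam T κ) (k : Fin r) :
    IsSST (SkewD (C k.succ) (C k.castSucc)) (unitWeight k (mu k)) (res hC T k) := by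
  constructor
  case comp_le =>
    intro z
    exact hT.comp_le ⟨z.1, skew_inDiag hC z.2⟩
  case row_weak =>
    intro z z' h1 h2 h3
    exact hT.row_weak ⟨z.1, skew_inDiag hC z.2⟩ ⟨z'.1, skew_inDiag hC z'.2⟩ h1 h2 h3
  case col_strict =>
    intro z z' h1 h2 h3
    exact hT.col_strict ⟨z.1, skew_inDiag hC z.2⟩ ⟨z'.1, skew_inDiag hC z'.2⟩ h1 h2 h3
  case weight =>
    intro e
    by_cases he : e.1 = k
    · obtain ⟨c, a⟩ := e
      dsimp only at he
      subst he
      rw [unitWeight_self]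
      have hw : mu c a = Nat.card {x : {x : Box r m // InDiag lam x} //
          T x = (⟨c, a⟩ : Entry r m)} := hT.weight ⟨c, a⟩
      rw [hw]
      apply Nat.card_congr
      exact
        { toFun := fun x => ⟨⟨x.1.1, (skew_iff hT hL c x.1.1).mpr
            ⟨x.1.2, congrArg Sigma.fst x.2⟩⟩, x.2⟩
          invFun := fun z => ⟨⟨z.1.1, skew_inDiag hC z.1.2⟩, z.2⟩
          left_inv := fun x => rfl
          right_inv := fun z => rfl }
    · have hem : IsEmpty {z : {x : Box r m // SkewD (C k.succ) (C k.castSucc) x} //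
          res hC T k z = e} := by
        refine ⟨fun z => he ?_⟩
        rw [← z.2]
        exact ((skew_iff hT hL k z.1.1).mp z.1.2).choose_spec
      rw [Nat.card_of_isEmpty]
      exact dif_neg he

lemma res_isSingular (hC : IsTheta lam mu C)
    {T : {x : Box r m // InDiag lam x} → Entry r m}
    (hT : IsSST (InDiag lam) mu T) (hsing : IsSingular (InDiag lam) T)
    (hL : ∀ κ, C κ = Lchain lam T κ) (k : Fin r) :
    IsSingular (SkewD (C k.succ) (C k.castSucc)) (res hC T k) := by
  intro zb a
  have hbd : InDiag lam zb.1 := skew_inDiag hC zb.2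
  have hcompb : (T ⟨zb.1, hbd⟩).1 = k := ((skew_iff hT hL k zb.1).mp zb.2).choose_spec
  have key : ∀ v : ℕ,
      Nat.card {z : {x : Box r m // SkewD (C k.succ) (C k.castSucc) x} //
        (res hC T k z).1 = (res hC T k zb).1 ∧ BoxGE z.1 zb.1 ∧
          ((res hC T k z).2 : ℕ) = v} =
      Nat.card {y : {x : Box r m // InDiag lam x} //
        (T y).1 = (T ⟨zb.1, hbd⟩).1 ∧ BoxGE y.1 zb.1 ∧ ((T y).2 : ℕ) = v} := by
    intro v
    refine (res_transfer hC hT hL k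
      (fun bx en => en.1 = (res hC T k zb).1 ∧ BoxGE bx zb.1 ∧ (en.2 : ℕ) = v)).symm.trans
      (Nat.card_congr (Equiv.subtypeEquivRight ?_))
    intro y
    constructor
    · rintro ⟨h0, h1, h2, h3⟩
      exact ⟨h1, h2, h3⟩
    · rintro ⟨h1, h2, h3⟩
      exact ⟨h1.trans hcompb, h1, h2, h3⟩
  rw [key (a + 1), key a]
  exact hsing ⟨zb.1, hbd⟩ a

end GlueRes


/-- `β_{λμ} = ∑_{Θ(λ,μ)} ∏_{k=1}^r #{singular semistandard tableaux of skew shape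
`λ_{⟨k⟩}/λ_{⟨k-1⟩}` and weight `(∅,…,∅,μ^{(k)},∅,…,∅)}`. -/
theorem beta_eq_sum_theta_skew (r n : ℕ) (hr : 1 ≤ r) (m : Fin r → ℕ) (hm : ∀ k, n ≤ m k)
    (lam mu : MComp r m) (hlam : IsMPartition lam) (hlams : size lam = n)
    (hmu : IsMPartition mu) (hmus : size mu = n) :
    beta lam mu = ∑ᶠ C : {L : Fin (r + 1) → MComp r m // IsTheta lam mu L},
      ∏ k : Fin r, nSingSST (SkewD (C.1 k.succ) (C.1 k.castSucc)) (unitWeight k (mu k)) := by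
  classical
  haveI hfin : Finite {L : Fin (r + 1) → MComp r m // IsTheta lam mu L} := by
    apply Finite.of_injective
      (β := Fin (r + 1) → ∀ c : Fin r, ∀ i : Fin (m c), Fin (lam c i + 1))
      (fun L κ c i => ⟨L.1 κ c i, Nat.lt_succ_of_le (theta_le_lam L.2 κ c i)⟩)
    intro L L' h
    apply Subtype.ext
    funext κ c i
    exact congrArg Fin.val (congrFun (congrFun (congrFun h κ) c) i)
  haveI := Fintype.ofFinite {L : Fin (r + 1) → MComp r m // IsTheta lam mu L}
  rw [finsum_eq_sum_of_fintype]
  set ST := {T : {x : Box r m // InDiag lam x} → Entry r m //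
    IsSST (InDiag lam) mu T ∧ IsSingular (InDiag lam) T} with hST
  let F : ST → {L : Fin (r + 1) → MComp r m // IsTheta lam mu L} :=
    fun T => ⟨Lchain lam T.1, isTheta_Lchain hlam T.2.1⟩
  have hbeta : beta lam mu = Nat.card ST := rfl
  rw [hbeta]
  rw [← Nat.card_congr (Equiv.sigmaFiberEquiv F), nat_card_sigma]
  apply Finset.sum_congr rfl
  intro Ch _
  have hfib : {T : ST // F T = Ch} ≃
      ∀ k : Fin r, {U : {x : Box r m // SkewD (Ch.1 k.succ) (Ch.1 k.castSucc) x} → Entry r m //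
        IsSST (SkewD (Ch.1 k.succ) (Ch.1 k.castSucc)) (unitWeight k (mu k)) U ∧
        IsSingular (SkewD (Ch.1 k.succ) (Ch.1 k.castSucc)) U} := by
    have hLa : ∀ (T : {T : ST // F T = Ch}) (κ : Fin (r + 1)),
        Ch.1 κ = Lchain lam T.1.1 κ := fun T κ =>
      (congrFun (congrArg Subtype.val T.2) κ).symm
    exact
      { toFun := fun T k => ⟨res Ch.2 T.1.1 k,
          res_isSST Ch.2 T.1.2.1 (hLa T) k,
          res_isSingular Ch.2 T.1.2.1 T.1.2.2 (hLa T) k⟩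
        invFun := fun Us => ⟨⟨glue Ch.2 (fun k => (Us k).1),
          glue_isSST Ch.2 (fun k => (Us k).2.1),
          glue_isSingular Ch.2 (fun k => (Us k).2.1) (fun k => (Us k).2.2)⟩,
          Subtype.ext (funext fun κ =>
            lev_glue Ch.2 (fun k => (Us k).2.1)
              (glue_isSST Ch.2 (fun k => (Us k).2.1)) κ)⟩
        left_inv := fun T => by
          apply Subtype.ext
          apply Subtype.ext
          funext x
          rfl
        right_inv := fun Us => by
          funext k
          apply Subtype.ext
          funext z
          exact glue_at (x := ⟨z.1, skew_inDiag Ch.2 z.2⟩) Ch.2 (fun k' => (Us k').1)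
            (blk_eq (x := ⟨z.1, skew_inDiag Ch.2 z.2⟩) Ch.2 z.2) z.2 }
  rw [Nat.card_congr hfib, Nat.card_pi]
  rfl

end CQSA
end
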